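/- Let Ω ⊂ ℝ^N be a bounded domain, let f(û) ∈ L²(Ω), û ∈ H¹₀(Ω), and define F(û) = −Δû − f(û) ∈ H⁻¹(Ω) (i.e. ⟨F(û), v⟩ = (∇û, ∇v)_{L²} − (f(û), v)_{L²}). Then for every ρ ∈ H(div, Ω) = { τ ∈ L²(Ω)^N : div τ ∈ L²(Ω) }, ‖F(û)‖_{H⁻¹} ≤ ‖−∇û + ρ‖_{L²} + C₂ ‖div ρ + f(û)‖_{L²}, where C₂ satisfies ‖v‖_{L²} ≤ C₂ ‖v‖_{H¹₀} for all v ∈ H¹₀(Ω); in particular this uses the bound ‖div ω‖_{H⁻¹} ≤ ‖ω‖_{L²} for ω ∈ H(div, Ω). -/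

import Mathlib

/-!
STATEMENT 8: residual bound via an `H(div,Ω)` approximation `ρ` to `∇û`:
`‖F(û)‖_{H⁻¹} ≤ ‖−∇û + ρ‖_{L²} + C₂ ‖div ρ + f(û)‖_{L²}` for
`⟨F(û),v⟩ = (∇û,∇v)_{L²} − (f(û),v)_{L²}`.

`H¹₀(Ω)` (with the `τ`-inner product) is formalized on its dense core `C_c^∞(Ω)`;
`H(div,Ω)` membership is formalized for `C¹` vector fields with field and divergence in
`L²(Ω)`.  The `H⁻¹` bound is expressed against all test functions `v ∈ H¹₀(Ω)`.
-/

open MeasureTheory Real RealInnerProductSpace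

/-- membership in the dense core `C_c^∞(Ω)` of `H¹₀(Ω)`. -/
def IsH10Fun {N : ℕ} (Ω : Set (EuclideanSpace ℝ (Fin N)))
    (u : EuclideanSpace ℝ (Fin N) → ℝ) : Prop :=
  ContDiff ℝ (⊤ : ℕ∞) u ∧ HasCompactSupport u ∧ tsupport u ⊆ Ω

/-- the divergence `div ρ = ∑ i ∂ρᵢ/∂xᵢ` of a vector field. -/
noncomputable def divg {N : ℕ} (ρ : EuclideanSpace ℝ (Fin N) → EuclideanSpace ℝ (Fin N))
    (x : EuclideanSpace ℝ (Fin N)) : ℝ :=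
  ∑ i : Fin N, ⟪fderiv ℝ ρ x (EuclideanSpace.single i 1), EuclideanSpace.single i 1⟫

section Aux

variable {α : Type*} [MeasurableSpace α] {μ : Measure α}

/-- Cauchy–Schwarz for integrals of products of real functions. -/
lemma cs_scalar {f g : α → ℝ} (hf : MemLp f 2 μ) (hg : MemLp g 2 μ) :
    |∫ a, f a * g a ∂μ| ≤ Real.sqrt (∫ a, f a ^ 2 ∂μ) * Real.sqrt (∫ a, g a ^ 2 ∂μ) := by
  have h2 : (ENNReal.ofReal (2:ℝ)) = 2 := by norm_num
  have hpq : Real.HolderConjugate 2 2 := Real.HolderConjugate.two_two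
  have key := integral_mul_norm_le_Lp_mul_Lq (μ := μ) hpq (h2 ▸ hf) (h2 ▸ hg)
  have e1 : ∀ (h : α → ℝ), (∫ a, ‖h a‖ ^ (2:ℝ) ∂μ) = ∫ a, h a ^ 2 ∂μ := by
    intro h
    refine integral_congr_ae (Filter.Eventually.of_forall fun a => ?_)
    show ‖h a‖ ^ (2:ℝ) = h a ^ 2
    rw [show (2:ℝ) = ((2:ℕ):ℝ) by norm_num, Real.rpow_natCast]
    simp [Real.norm_eq_abs, sq_abs]
  calc |∫ a, f a * g a ∂μ| ≤ ∫ a, ‖f a‖ * ‖g a‖ ∂μ := by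
        simpa [Real.norm_eq_abs, abs_mul] using
          norm_integral_le_integral_norm (μ := μ) (fun a => f a * g a)
    _ ≤ (∫ a, ‖f a‖ ^ (2:ℝ) ∂μ) ^ (1/(2:ℝ)) * (∫ a, ‖g a‖ ^ (2:ℝ) ∂μ) ^ (1/(2:ℝ)) := key
    _ = _ := by rw [e1 f, e1 g, ← Real.sqrt_eq_rpow, ← Real.sqrt_eq_rpow]

/-- the product of two `L²` functions is integrable. -/
lemma cs_mul_integrable {f g : α → ℝ} (hf : MemLp f 2 μ) (hg : MemLp g 2 μ) :
    Integrable (fun a => f a * g a) μ := by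
  have := hg.smul (φ := f) hf (p := 2) (q := 2) (r := 1)
  exact memLp_one_iff_integrable.mp (by simpa [smul_eq_mul] using this : MemLp (f * g) 1 μ)

/-- the inner product of two `L²` vector fields is integrable. -/
lemma cs_inner_integrable {E : Type*} [NormedAddCommGroup E] [InnerProductSpace ℝ E]
    {F G : α → E} (hF : MemLp F 2 μ) (hG : MemLp G 2 μ) :
    Integrable (fun a => ⟪F a, G a⟫) μ := by
  refine Integrable.mono' (cs_mul_integrable hF.norm hG.norm) (hF.1.inner hG.1)
    (Filter.Eventually.of_forall fun a => ?_)
  simpa [Real.norm_eq_abs] using abs_real_inner_le_norm (F a) (G a)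

/-- Cauchy–Schwarz for integrals of inner products of vector fields. -/
lemma cs_inner {E : Type*} [NormedAddCommGroup E] [InnerProductSpace ℝ E] {F G : α → E}
    (hF : MemLp F 2 μ) (hG : MemLp G 2 μ) :
    |∫ a, ⟪F a, G a⟫ ∂μ| ≤
      Real.sqrt (∫ a, ‖F a‖ ^ 2 ∂μ) * Real.sqrt (∫ a, ‖G a‖ ^ 2 ∂μ) := by
  have hFG : Integrable (fun a => ‖F a‖ * ‖G a‖) μ := cs_mul_integrable hF.norm hG.norm
  calc |∫ a, ⟪F a, G a⟫ ∂μ| ≤ ∫ a, |⟪F a, G a⟫| ∂μ := by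
        simpa [Real.norm_eq_abs] using
          norm_integral_le_integral_norm (μ := μ) (fun a => ⟪F a, G a⟫)
    _ ≤ ∫ a, ‖F a‖ * ‖G a‖ ∂μ := by
        refine integral_mono_of_nonneg (Filter.Eventually.of_forall fun a => abs_nonneg _)
          hFG (Filter.Eventually.of_forall fun a => ?_)
        exact abs_real_inner_le_norm (F a) (G a)
    _ ≤ |∫ a, ‖F a‖ * ‖G a‖ ∂μ| := le_abs_self _
    _ ≤ _ := cs_scalar hF.norm hG.norm

end Aux

lemma inner_gradient_eq' {E : Type*} [NormedAddCommGroup E] [InnerProductSpace ℝ E]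
    [CompleteSpace E] (f : E → ℝ) (x y : E) : ⟪gradient f x, y⟫ = fderiv ℝ f x y := by
  rw [show gradient f x = (InnerProductSpace.toDual ℝ E).symm (fderiv ℝ f x) from rfl,
    ← InnerProductSpace.toDual_apply_apply, LinearIsometryEquiv.apply_symm_apply]

/-- integration by parts: `∫ ⟪ρ, ∇v⟫ = -∫ (div ρ) v` for a `C¹` vector field `ρ` and a
compactly supported smooth function `v`. -/
lemma ibp {N : ℕ} (ρ : EuclideanSpace ℝ (Fin N) → EuclideanSpace ℝ (Fin N))
    (hρ : ContDiff ℝ 1 ρ) (v : EuclideanSpace ℝ (Fin N) → ℝ)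
    (hv : ContDiff ℝ (⊤ : ℕ∞) v) (hvc : HasCompactSupport v) :
    ∫ x, ⟪ρ x, gradient v x⟫ = - ∫ x, divg ρ x * v x := by
  classical
  have hvd : Differentiable ℝ v := hv.differentiable (by simp)
  have hvcont : Continuous v := hv.continuous
  have hfdc : Continuous (fderiv ℝ v) := hv.continuous_fderiv (by simp)
  have hρd : Differentiable ℝ ρ := hρ.differentiable one_ne_zero
  have hρc : Continuous ρ := hρ.continuous
  have hρfc : Continuous (fderiv ℝ ρ) := hρ.continuous_fderiv one_ne_zero
  have hfvc : HasCompactSupport (fderiv ℝ v) := hvc.fderiv ℝ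
  set e : Fin N → EuclideanSpace ℝ (Fin N) := fun i => EuclideanSpace.single i 1 with he
  have hfcoord : ∀ (i : Fin N) (x : EuclideanSpace ℝ (Fin N)),
      fderiv ℝ (fun y => ρ y i) x = (EuclideanSpace.proj i).comp (fderiv ℝ ρ x) := fun i x =>
    (((EuclideanSpace.proj (𝕜 := ℝ) i).hasFDerivAt).comp x (hρd x).hasFDerivAt).fderiv
  have hpt : ∀ x, ⟪ρ x, gradient v x⟫ = ∑ i : Fin N, ρ x i * fderiv ℝ v x (e i) := by
    intro x
    rw [PiLp.inner_apply]
    refine Finset.sum_congr rfl fun i _ => ?_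
    have h1 : (gradient v x) i = fderiv ℝ v x (e i) := by
      have h2 := inner_gradient_eq' v x (e i)
      rw [he] at h2
      rw [EuclideanSpace.inner_single_right] at h2
      simpa [starRingEnd_apply] using h2
    rw [← h1]
    simp [RCLike.inner_apply, starRingEnd_apply, mul_comm]
  have hint1 : ∀ i : Fin N, Integrable (fun x => ρ x i * fderiv ℝ v x (e i)) := by
    intro i
    apply Continuous.integrable_of_hasCompactSupport
    · exact (((EuclideanSpace.proj (𝕜 := ℝ) i).continuous).comp hρc).mul
        (hfdc.clm_apply continuous_const)
    · have : HasCompactSupport (fun x => fderiv ℝ v x (e i)) :=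
        hfvc.comp_left (g := fun L : _ →L[ℝ] ℝ => L (e i)) rfl
      exact this.mul_left
  have hint2 : ∀ i : Fin N, Integrable (fun x => (fderiv ℝ ρ x (e i)) i * v x) := by
    intro i
    apply Continuous.integrable_of_hasCompactSupport
    · exact (((EuclideanSpace.proj (𝕜 := ℝ) i).continuous).comp
        (hρfc.clm_apply continuous_const)).mul hvcont
    · exact hvc.mul_left
  have hint3 : ∀ i : Fin N, Integrable (fun x => ρ x i * v x) := by
    intro i
    apply Continuous.integrable_of_hasCompactSupport
    · exact (((EuclideanSpace.proj (𝕜 := ℝ) i).continuous).comp hρc).mul hvcont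
    · exact hvc.mul_left
  have key : ∀ i : Fin N, ∫ x, ρ x i * fderiv ℝ v x (e i)
      = - ∫ x, (fderiv ℝ ρ x (e i)) i * v x := by
    intro i
    have := integral_mul_fderiv_eq_neg_fderiv_mul_of_integrable (μ := volume)
      (f := fun x => ρ x i) (g := v) (v := e i)
      (by simpa only [hfcoord, ContinuousLinearMap.comp_apply, PiLp.proj_apply]
        using hint2 i)
      (hint1 i) (hint3 i)
      (fun x _ => ((EuclideanSpace.proj (𝕜 := ℝ) i).differentiableAt).comp x (hρd x)) (fun x _ => hvd x)
    rw [this]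
    congr 1
    refine integral_congr_ae (Filter.Eventually.of_forall fun x => ?_)
    simp [hfcoord]
  calc ∫ x, ⟪ρ x, gradient v x⟫ = ∫ x, ∑ i : Fin N, ρ x i * fderiv ℝ v x (e i) :=
        integral_congr_ae (Filter.Eventually.of_forall hpt)
    _ = ∑ i : Fin N, ∫ x, ρ x i * fderiv ℝ v x (e i) :=
        integral_finset_sum _ (fun i _ => hint1 i)
    _ = ∑ i : Fin N, - ∫ x, (fderiv ℝ ρ x (e i)) i * v x :=
        Finset.sum_congr rfl fun i _ => key i
    _ = - ∑ i : Fin N, ∫ x, (fderiv ℝ ρ x (e i)) i * v x := by rw [← Finset.sum_neg_distrib]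
    _ = - ∫ x, ∑ i : Fin N, (fderiv ℝ ρ x (e i)) i * v x := by
        rw [integral_finset_sum _ (fun i _ => hint2 i)]
    _ = - ∫ x, divg ρ x * v x := by
        congr 1
        refine integral_congr_ae (Filter.Eventually.of_forall fun x => ?_)
        simp only [divg]
        rw [Finset.sum_mul]
        refine Finset.sum_congr rfl fun i _ => ?_
        rw [EuclideanSpace.inner_single_right]
        simp [starRingEnd_apply, he]

/-- gradient of a smooth function is continuous. -/
lemma gradient_continuous {E : Type*} [NormedAddCommGroup E] [InnerProductSpace ℝ E]
    [CompleteSpace E] {f : E → ℝ} (hf : ContDiff ℝ (⊤ : ℕ∞) f) : Continuous (gradient f) :=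
  (InnerProductSpace.toDual ℝ E).symm.continuous.comp (hf.continuous_fderiv (by simp))

/-- gradient of a compactly supported function has compact support. -/
lemma gradient_hasCompactSupport {E : Type*} [NormedAddCommGroup E] [InnerProductSpace ℝ E]
    [CompleteSpace E] {f : E → ℝ} (hf : HasCompactSupport f) :
    HasCompactSupport (gradient f) :=
  (hf.fderiv ℝ).comp_left (g := (InnerProductSpace.toDual ℝ E).symm) (map_zero _)

/-- the gradient vanishes off the topological support. -/
lemma gradient_eq_zero_of_nmem_tsupport {E : Type*} [NormedAddCommGroup E]
    [InnerProductSpace ℝ E] [CompleteSpace E] {f : E → ℝ} {x : E} (hx : x ∉ tsupport f) :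
    gradient f x = 0 := by
  have h0 : fderiv ℝ f x = 0 := by
    by_contra h
    exact hx (support_fderiv_subset ℝ (by simpa [Function.mem_support] using h))
  show (InnerProductSpace.toDual ℝ E).symm (fderiv ℝ f x) = 0
  rw [h0, map_zero]

theorem residual_norm_bound_Hdiv
    (N : ℕ) (Ω : Set (EuclideanSpace ℝ (Fin N)))
    (hΩbdd : Bornology.IsBounded Ω) (hΩmeas : MeasurableSet Ω)
    (τ : ℝ) (hτ : 0 ≤ τ)
    (C₂ : ℝ)
    (hC₂ : ∀ v, IsH10Fun Ω v →
      Real.sqrt (∫ x in Ω, (v x) ^ 2) ≤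
        C₂ * Real.sqrt ((∫ x in Ω, ‖gradient v x‖ ^ 2) + τ * ∫ x in Ω, (v x) ^ 2))
    -- `û ∈ H¹₀(Ω)` and `f(û) ∈ L²(Ω)`
    (uhat : EuclideanSpace ℝ (Fin N) → ℝ) (huhat : IsH10Fun Ω uhat)
    (fuhat : EuclideanSpace ℝ (Fin N) → ℝ)
    (hf : MemLp fuhat 2 (volume.restrict Ω))
    -- `ρ ∈ H(div, Ω)`
    (ρ : EuclideanSpace ℝ (Fin N) → EuclideanSpace ℝ (Fin N))
    (hρ : ContDiff ℝ 1 ρ)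
    (hρL2 : MemLp (fun x => ‖ρ x‖) 2 (volume.restrict Ω))
    (hdivρL2 : MemLp (fun x => divg ρ x) 2 (volume.restrict Ω)) :
    ∀ v, IsH10Fun Ω v →
      |(∫ x in Ω, ⟪gradient uhat x, gradient v x⟫) - ∫ x in Ω, fuhat x * v x| ≤
        (Real.sqrt (∫ x in Ω, ‖-gradient uhat x + ρ x‖ ^ 2) +
            C₂ * Real.sqrt (∫ x in Ω, (divg ρ x + fuhat x) ^ 2)) *
          Real.sqrt ((∫ x in Ω, ‖gradient v x‖ ^ 2) + τ * ∫ x in Ω, (v x) ^ 2) := by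
  intro v hv
  obtain ⟨hv1, hv2, hv3⟩ := hv
  obtain ⟨hu1, hu2, hu3⟩ := huhat
  -- basic facts about `v` and `uhat`
  have hgvcont : Continuous (gradient v) := gradient_continuous hv1
  have hgvsupp : HasCompactSupport (gradient v) := gradient_hasCompactSupport hv2
  have hgucont : Continuous (gradient uhat) := gradient_continuous hu1
  have hgusupp : HasCompactSupport (gradient uhat) := gradient_hasCompactSupport hu2
  have hv0 : ∀ x ∉ Ω, v x = 0 := fun x hx =>
    image_eq_zero_of_notMem_tsupport (fun h => hx (hv3 h))
  have hgv0 : ∀ x ∉ Ω, gradient v x = 0 := fun x hx =>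
    gradient_eq_zero_of_nmem_tsupport (fun h => hx (hv3 h))
  -- `MemLp` facts over `volume.restrict Ω`
  have mgv : MemLp (gradient v) 2 (volume.restrict Ω) :=
    MemLp.restrict Ω (hgvcont.memLp_of_hasCompactSupport hgvsupp)
  have mgu : MemLp (gradient uhat) 2 (volume.restrict Ω) :=
    MemLp.restrict Ω (hgucont.memLp_of_hasCompactSupport hgusupp)
  have mv : MemLp v 2 (volume.restrict Ω) :=
    MemLp.restrict Ω (hv1.continuous.memLp_of_hasCompactSupport hv2)
  have mρ : MemLp ρ 2 (volume.restrict Ω) :=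
    (memLp_norm_iff hρ.continuous.aestronglyMeasurable).mp hρL2
  have mdiff : MemLp (fun x => gradient uhat x - ρ x) 2 (volume.restrict Ω) := mgu.sub mρ
  have mdivf : MemLp (fun x => divg ρ x + fuhat x) 2 (volume.restrict Ω) := hdivρL2.add hf
  -- the key identity
  have i1 : Integrable (fun x => ⟪gradient uhat x - ρ x, gradient v x⟫) (volume.restrict Ω) :=
    cs_inner_integrable mdiff mgv
  have i2 : Integrable (fun x => ⟪ρ x, gradient v x⟫) (volume.restrict Ω) :=
    cs_inner_integrable mρ mgv
  have i3 : Integrable (fun x => divg ρ x * v x) (volume.restrict Ω) :=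
    cs_mul_integrable hdivρL2 mv
  have i4 : Integrable (fun x => fuhat x * v x) (volume.restrict Ω) :=
    cs_mul_integrable hf mv
  have h1 : ∫ x in Ω, ⟪gradient uhat x, gradient v x⟫
      = (∫ x in Ω, ⟪gradient uhat x - ρ x, gradient v x⟫)
        + ∫ x in Ω, ⟪ρ x, gradient v x⟫ := by
    rw [← integral_add i1 i2]
    refine integral_congr_ae (Filter.Eventually.of_forall fun x => ?_)
    show ⟪gradient uhat x, gradient v x⟫
      = ⟪gradient uhat x - ρ x, gradient v x⟫ + ⟪ρ x, gradient v x⟫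
    rw [← inner_add_left, sub_add_cancel]
  have h2 : ∫ x in Ω, ⟪ρ x, gradient v x⟫ = - ∫ x in Ω, divg ρ x * v x := by
    rw [setIntegral_eq_integral_of_forall_compl_eq_zero
        (fun x hx => by rw [hgv0 x hx, inner_zero_right]),
      setIntegral_eq_integral_of_forall_compl_eq_zero
        (fun x hx => by rw [hv0 x hx, mul_zero])]
    exact ibp ρ hρ v hv1 hv2
  have h3 : ∫ x in Ω, (divg ρ x + fuhat x) * v x
      = (∫ x in Ω, divg ρ x * v x) + ∫ x in Ω, fuhat x * v x := by
    rw [← integral_add i3 i4]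
    refine integral_congr_ae (Filter.Eventually.of_forall fun x => ?_)
    ring
  have e_main : (∫ x in Ω, ⟪gradient uhat x, gradient v x⟫) - ∫ x in Ω, fuhat x * v x
      = (∫ x in Ω, ⟪gradient uhat x - ρ x, gradient v x⟫)
        - ∫ x in Ω, (divg ρ x + fuhat x) * v x := by
    rw [h1, h2, h3]; ring
  -- the bounds
  set S := Real.sqrt ((∫ x in Ω, ‖gradient v x‖ ^ 2) + τ * ∫ x in Ω, (v x) ^ 2) with hS
  have hS1 : Real.sqrt (∫ x in Ω, ‖gradient v x‖ ^ 2) ≤ S :=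
    Real.sqrt_le_sqrt (le_add_of_nonneg_right
      (mul_nonneg hτ (integral_nonneg fun x => sq_nonneg _)))
  have enorm : (∫ x in Ω, ‖-gradient uhat x + ρ x‖ ^ 2)
      = ∫ x in Ω, ‖gradient uhat x - ρ x‖ ^ 2 := by
    refine integral_congr_ae (Filter.Eventually.of_forall fun x => ?_)
    show ‖-gradient uhat x + ρ x‖ ^ 2 = ‖gradient uhat x - ρ x‖ ^ 2
    rw [neg_add_eq_sub, norm_sub_rev]
  have b1 : |∫ x in Ω, ⟪gradient uhat x - ρ x, gradient v x⟫|
      ≤ Real.sqrt (∫ x in Ω, ‖-gradient uhat x + ρ x‖ ^ 2) * S := by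
    calc |∫ x in Ω, ⟪gradient uhat x - ρ x, gradient v x⟫|
        ≤ Real.sqrt (∫ x in Ω, ‖gradient uhat x - ρ x‖ ^ 2)
          * Real.sqrt (∫ x in Ω, ‖gradient v x‖ ^ 2) := cs_inner mdiff mgv
      _ ≤ Real.sqrt (∫ x in Ω, ‖-gradient uhat x + ρ x‖ ^ 2) * S := by
          rw [enorm]
          exact mul_le_mul_of_nonneg_left hS1 (Real.sqrt_nonneg _)
  have b2 : |∫ x in Ω, (divg ρ x + fuhat x) * v x|
      ≤ Real.sqrt (∫ x in Ω, (divg ρ x + fuhat x) ^ 2) * (C₂ * S) := by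
    calc |∫ x in Ω, (divg ρ x + fuhat x) * v x|
        ≤ Real.sqrt (∫ x in Ω, (divg ρ x + fuhat x) ^ 2)
          * Real.sqrt (∫ x in Ω, (v x) ^ 2) := cs_scalar mdivf mv
      _ ≤ Real.sqrt (∫ x in Ω, (divg ρ x + fuhat x) ^ 2) * (C₂ * S) :=
          mul_le_mul_of_nonneg_left (hC₂ v ⟨hv1, hv2, hv3⟩) (Real.sqrt_nonneg _)
  calc |(∫ x in Ω, ⟪gradient uhat x, gradient v x⟫) - ∫ x in Ω, fuhat x * v x|
      = |(∫ x in Ω, ⟪gradient uhat x - ρ x, gradient v x⟫)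
          - ∫ x in Ω, (divg ρ x + fuhat x) * v x| := by rw [e_main]
    _ ≤ |∫ x in Ω, ⟪gradient uhat x - ρ x, gradient v x⟫|
          + |∫ x in Ω, (divg ρ x + fuhat x) * v x| := abs_sub _ _
    _ ≤ Real.sqrt (∫ x in Ω, ‖-gradient uhat x + ρ x‖ ^ 2) * S
          + Real.sqrt (∫ x in Ω, (divg ρ x + fuhat x) ^ 2) * (C₂ * S) := add_le_add b1 b2
    _ = (Real.sqrt (∫ x in Ω, ‖-gradient uhat x + ρ x‖ ^ 2) +
            C₂ * Real.sqrt (∫ x in Ω, (divg ρ x + fuhat x) ^ 2)) * S := by ring
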